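/- The q-difference equations H^{(0)}(x) = 1 - q^2 x^3 - q^3 x^4 H^{(1)}(q x) and H^{(1)}(x) = 1 - q x^3 - q^6 x^8 H^{(0)}(q x) hold. -/

import Mathlib

noncomputable section

/-- The product (coefficientwise) topology on formal power series. -/
instance powerSeriesTopology {R : Type*} [Semiring R] [TopologicalSpace R] :
    TopologicalSpace (PowerSeries R) :=
  TopologicalSpace.induced (fun f (n : ℕ) => (PowerSeries.coeff (R := R) n) f) Pi.topologicalSpace

/-- Formal power series in `x` (outer variable) over formal power series in `q`
(inner variable); i.e. formal power series in `q` and `x`. -/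
abbrev Rqx : Type := PowerSeries (PowerSeries ℚ)

/-- The variable `x`. -/
def Xx : Rqx := PowerSeries.X

/-- The variable `q`, viewed as a constant (in `x`) power series. -/
def Qc : Rqx := PowerSeries.C (R := PowerSeries ℚ) PowerSeries.X

/-- The period-24 function `χ₂₄⁽⁰⁾`: value 1 at `n ≡ 5, 19`, `-1` at `n ≡ 11, 13 (mod 24)`. -/
def chi0 (n : ℕ) : ℤ :=
  if n % 24 = 5 ∨ n % 24 = 19 then 1 else if n % 24 = 11 ∨ n % 24 = 13 then -1 else 0

/-- The period-24 function `χ₂₄⁽¹⁾`: value 1 at `n ≡ 1, 23`, `-1` at `n ≡ 7, 17 (mod 24)`. -/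
def chi1 (n : ℕ) : ℤ :=
  if n % 24 = 1 ∨ n % 24 = 23 then 1 else if n % 24 = 7 ∨ n % 24 = 17 then -1 else 0

/-- `H⁽⁰⁾(x) = ∑_{n≥0} χ₂₄⁽⁰⁾(n) q^{(n²-25)/48} x^{(n-5)/2}`. -/
def H0 : Rqx := ∑' n : ℕ, (chi0 n : Rqx) * Qc ^ ((n ^ 2 - 25) / 48) * Xx ^ ((n - 5) / 2)

/-- `H⁽¹⁾(x) = ∑_{n≥0} χ₂₄⁽¹⁾(n) q^{(n²-1)/48} x^{(n-1)/2}`. -/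
def H1 : Rqx := ∑' n : ℕ, (chi1 n : Rqx) * Qc ^ ((n ^ 2 - 1) / 48) * Xx ^ ((n - 1) / 2)

/-!
Each series has a single term per power of `x`: only `n = 2k + 5` (resp. `n = 2k + 1`) contributes
to `x^k`, so `H⁽⁰⁾ = ∑ χ₂₄⁽⁰⁾(2k+5) q^{k(k+5)/12} x^k` and `H⁽¹⁾ = ∑ χ₂₄⁽¹⁾(2k+1) q^{k(k+1)/12} x^k`.
Comparing coefficients of `x^{k+4}` (resp. `x^{k+8}`), the equations reduce to
`χ₂₄⁽⁰⁾(n+12) = -χ₂₄⁽¹⁾(n)`, `χ₂₄⁽¹⁾(n+12) = -χ₂₄⁽⁰⁾(n)` and the exponent identities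
`(k+4)(k+9) = k(k+1) + 12(k+3)`, `(k+8)(k+9) = k(k+5) + 12(k+6)`;
the finitely many lower coefficients are checked directly.
-/

open PowerSeries Topology

namespace PowerSeries

variable {R : Type*} [Semiring R] [TopologicalSpace R]

theorem isEmbedding_coeff : IsEmbedding fun (f : R⟦X⟧) (n : ℕ) => coeff n f :=
  ⟨⟨rfl⟩, fun _ _ h => ext (congrFun h)⟩

instance [T2Space R] : T2Space R⟦X⟧ := isEmbedding_coeff.t2Space

theorem tendsto_iff_forall_tendsto_coeff {ι : Type*} {f : ι → R⟦X⟧} {u : Filter ι} {g : R⟦X⟧} :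
    Filter.Tendsto f u (𝓝 g) ↔ ∀ n, Filter.Tendsto (fun i => coeff n (f i)) u (𝓝 (coeff n g)) := by
  rw [isEmbedding_coeff.isInducing.tendsto_nhds_iff, tendsto_pi_nhds]
  rfl

theorem hasSum_iff_forall_hasSum_coeff {ι : Type*} {f : ι → R⟦X⟧} {g : R⟦X⟧} :
    HasSum f g ↔ ∀ n, HasSum (fun i => coeff n (f i)) (coeff n g) := by
  simp_rw [HasSum, ← map_sum]
  exact tendsto_iff_forall_tendsto_coeff

theorem tsum_monomial_eq_mk [T2Space R] {c : ℕ → R} {d s : ℕ → ℕ}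
    (hds : ∀ k, d (s k) = k) (hc : ∀ n, c n ≠ 0 → s (d n) = n) :
    ∑' n, monomial (d n) (c n) = mk fun k => c (s k) := by
  refine (hasSum_iff_forall_hasSum_coeff.2 fun k => ?_).tsum_eq
  rw [coeff_mk]
  convert hasSum_single (s k) fun n hn => ?_
  · rw [coeff_monomial, if_pos (hds k).symm]
  · rw [coeff_monomial, ite_eq_right_iff]
    rintro rfl
    by_contra hcn
    exact hn (hc n hcn).symm

end PowerSeries

theorem Qc_pow_mul_Xx_pow (e m : ℕ) : Qc ^ e * Xx ^ m = monomial m (X ^ e) := by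
  rw [Qc, Xx, monomial_eq_C_mul_X_pow, map_pow]

theorem Qc_mul_Xx_pow (m : ℕ) : Qc * Xx ^ m = monomial m X := by
  simpa using Qc_pow_mul_Xx_pow 1 m

theorem intCast_mul_Qc_pow_mul_Xx_pow (z : ℤ) (e m : ℕ) :
    (z : Rqx) * Qc ^ e * Xx ^ m = monomial m ((z : PowerSeries ℚ) * X ^ e) := by
  rw [mul_assoc, Qc_pow_mul_Xx_pow, ← map_intCast (C (R := PowerSeries ℚ)),
    monomial_eq_C_mul_X_pow, monomial_eq_C_mul_X_pow, map_mul, mul_assoc]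

theorem coeff_Qc_pow_mul_Xx_pow_mul_of_lt (e m : ℕ) (f : Rqx) {k : ℕ} (hk : k < m) :
    coeff k (Qc ^ e * Xx ^ m * f) = 0 := by
  rw [Qc_pow_mul_Xx_pow, monomial_eq_C_mul_X_pow, mul_comm (C _), mul_assoc, coeff_X_pow_mul',
    if_neg hk.not_ge]

theorem coeff_add_Qc_pow_mul_Xx_pow_mul_rescale (e m j : ℕ) (f : Rqx) :
    coeff (j + m) (Qc ^ e * Xx ^ m * rescale X f) = X ^ (e + j) * coeff j f := by
  rw [Qc_pow_mul_Xx_pow, monomial_eq_C_mul_X_pow, mul_comm (C _), mul_assoc, coeff_X_pow_mul,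
    coeff_C_mul, coeff_rescale, pow_add, mul_assoc]

theorem tsum_character_series_eq_mk (χ : ℕ → ℤ) (a : ℕ)
    (hχ : ∀ n, χ n ≠ 0 → a ≤ n ∧ n % 2 = a % 2) :
    ∑' n : ℕ, (χ n : Rqx) * Qc ^ ((n ^ 2 - a ^ 2) / 48) * Xx ^ ((n - a) / 2) =
      mk fun k => (χ (2 * k + a) : PowerSeries ℚ) * X ^ (k * (k + a) / 12) := by
  simp_rw [intCast_mul_Qc_pow_mul_Xx_pow]
  rw [tsum_monomial_eq_mk (s := fun k => 2 * k + a) (fun k => by omega)]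
  · congr 1
    funext k
    have hsq : (2 * k + a) ^ 2 - a ^ 2 = 4 * (k * (k + a)) := by
      rw [show (2 * k + a) ^ 2 = 4 * (k * (k + a)) + a ^ 2 by ring, Nat.add_sub_cancel]
    rw [hsq, Nat.mul_div_mul_left _ 12 (by norm_num : 0 < 4)]
  · intro n hn
    have := hχ n fun h => hn (by simp [h])
    omega

theorem chi0_add_twelve (n : ℕ) : chi0 (n + 12) = -chi1 n := by
  unfold chi0 chi1
  split_ifs <;> omega

theorem chi1_add_twelve (n : ℕ) : chi1 (n + 12) = -chi0 n := by
  unfold chi0 chi1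
  split_ifs <;> omega

theorem H0_eq_mk : H0 = mk fun k => (chi0 (2 * k + 5) : PowerSeries ℚ) * X ^ (k * (k + 5) / 12) :=
  tsum_character_series_eq_mk chi0 5 fun n h => by unfold chi0 at h; split_ifs at h <;> omega

theorem H1_eq_mk : H1 = mk fun k => (chi1 (2 * k + 1) : PowerSeries ℚ) * X ^ (k * (k + 1) / 12) :=
  tsum_character_series_eq_mk chi1 1 fun n h => by unfold chi1 at h; split_ifs at h <;> omega

theorem H0_q_difference :
    H0 = 1 - Qc ^ 2 * Xx ^ 3 - Qc ^ 3 * Xx ^ 4 * rescale (X : PowerSeries ℚ) H1 := by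
  rw [H0_eq_mk, H1_eq_mk]
  ext1 k
  rw [map_sub, map_sub, coeff_mk, coeff_one, Qc_pow_mul_Xx_pow, coeff_monomial]
  rcases lt_or_ge k 4 with hk | hk
  · rw [coeff_Qc_pow_mul_Xx_pow_mul_of_lt 3 4 _ hk]
    interval_cases k <;> norm_num [chi0]
  · obtain ⟨j, rfl⟩ : ∃ j, k = j + 4 := ⟨k - 4, by omega⟩
    rw [coeff_add_Qc_pow_mul_Xx_pow_mul_rescale, coeff_mk, if_neg (by omega), if_neg (by omega),
      show 2 * (j + 4) + 5 = 2 * j + 1 + 12 by ring, chi0_add_twelve,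
      show (j + 4) * (j + 4 + 5) = j * (j + 1) + 12 * (j + 3) by ring,
      Nat.add_mul_div_left _ _ (by norm_num : 0 < 12)]
    push_cast
    ring

theorem H1_q_difference :
    H1 = 1 - Qc * Xx ^ 3 - Qc ^ 6 * Xx ^ 8 * rescale (X : PowerSeries ℚ) H0 := by
  rw [H0_eq_mk, H1_eq_mk]
  ext1 k
  rw [map_sub, map_sub, coeff_mk, coeff_one, Qc_mul_Xx_pow, coeff_monomial]
  rcases lt_or_ge k 8 with hk | hk
  · rw [coeff_Qc_pow_mul_Xx_pow_mul_of_lt 6 8 _ hk]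
    interval_cases k <;> norm_num [chi1]
  · obtain ⟨j, rfl⟩ : ∃ j, k = j + 8 := ⟨k - 8, by omega⟩
    rw [coeff_add_Qc_pow_mul_Xx_pow_mul_rescale, coeff_mk, if_neg (by omega), if_neg (by omega),
      show 2 * (j + 8) + 1 = 2 * j + 5 + 12 by ring, chi1_add_twelve,
      show (j + 8) * (j + 8 + 1) = j * (j + 5) + 12 * (j + 6) by ring,
      Nat.add_mul_div_left _ _ (by norm_num : 0 < 12)]
    push_cast
    ring

/-- The $q$-difference equations
`H⁽⁰⁾(x) = 1 - q²x³ - q³x⁴ H⁽¹⁾(qx)` and `H⁽¹⁾(x) = 1 - qx³ - q⁶x⁸ H⁽⁰⁾(qx)`,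
where substituting `qx` for `x` is `PowerSeries.rescale q`. -/
theorem H_q_difference :
    H0 = 1 - Qc ^ 2 * Xx ^ 3 -
        Qc ^ 3 * Xx ^ 4 * PowerSeries.rescale (PowerSeries.X : PowerSeries ℚ) H1 ∧
      H1 = 1 - Qc * Xx ^ 3 -
        Qc ^ 6 * Xx ^ 8 * PowerSeries.rescale (PowerSeries.X : PowerSeries ℚ) H0 :=
  ⟨H0_q_difference, H1_q_difference⟩
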